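/- arXiv:2402.01387 — 2 statements merged into one kernel-verified Lean document; each statement's English description precedes it below -/
import Mathlib

section
/- Let A be the (m × (m-1)) integer matrix with entries A_{i,i} = α_i for 1 ≤ i ≤ m-1, A_{i+1,i} = -α_{i+1} for 1 ≤ i ≤ m-1, and all other entries zero, where α_1, …, α_m are positive integers. If α_1, …, α_m are pairwise coprime, then the cokernel of the ℤ-linear map ℤ^{m-1} → ℤ^m given by A is isomorphic to ℤ. -/
open Finset in
lemma exists_comb {ι : Type*} [DecidableEq ι] (α : ι → ℤ)
    (s : Finset ι) (hs : s.Nonempty)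
    (h : ∀ i ∈ s, ∀ j ∈ s, i ≠ j → IsCoprime (α i) (α j)) :
    ∃ u : ι → ℤ, ∑ i ∈ s, u i * ∏ k ∈ s.erase i, α k = 1 := by
  induction s using Finset.cons_induction with
  | empty => exact absurd hs (by simp)
  | cons j s hj ih =>
    rcases s.eq_empty_or_nonempty with rfl | hs'
    · exact ⟨fun _ => 1, by simp⟩
    · obtain ⟨u, hu⟩ := ih hs'
        (fun i hi j' hj' hij => h _ (Finset.mem_cons_of_mem hi) _ (Finset.mem_cons_of_mem hj') hij)
      have hco : IsCoprime (α j) (∏ k ∈ s, α k) :=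
        IsCoprime.prod_right fun k hk =>
          h j (Finset.mem_cons_self j s) k (Finset.mem_cons_of_mem hk) (by rintro rfl; exact hj hk)
      obtain ⟨a, b, hab⟩ := hco
      refine ⟨fun i => if i = j then b else a * u i, ?_⟩
      rw [Finset.sum_cons]; beta_reduce; rw [if_pos rfl, Finset.erase_cons]
      have key : ∀ i ∈ s, (if i = j then b else a * u i) * ∏ k ∈ (Finset.cons j s hj).erase i, α k
          = a * α j * (u i * ∏ k ∈ s.erase i, α k) := by
        intro i hi
        have hij : i ≠ j := fun e => hj (e ▸ hi)
        rw [if_neg hij, Finset.cons_eq_insert, Finset.erase_insert_of_ne hij.symm,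
          Finset.prod_insert (fun hm => hj (Finset.mem_of_mem_erase hm))]
        ring
      rw [Finset.sum_congr rfl key, ← Finset.mul_sum, hu, mul_one]
      linarith [hab]

/-- The boundary matrix `∂₁` of the round-handle chain complex of a Seifert fibered
3-manifold: diagonal entries `α_i`, subdiagonal entries `-α_{i+1}`, zeros elsewhere.
(Here the `m` of the paper is `m + 1`.) -/
def seifertMatrix {m : ℕ} (α : Fin (m + 1) → ℤ) : Matrix (Fin (m + 1)) (Fin m) ℤ :=
  fun i j => if i = j.castSucc then α j.castSucc else if i = j.succ then -α j.succ else 0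

section

variable {m : ℕ} (α : Fin (m + 1) → ℤ)


noncomputable def cc (i : Fin (m + 1)) : ℤ := ∏ k ∈ Finset.univ.erase i, α k

lemma cc_mul (i : Fin (m + 1)) : α i * cc α i = ∏ k, α k :=
  Finset.mul_prod_erase _ _ (Finset.mem_univ i)

/-- the functional -/
noncomputable def phi : (Fin (m + 1) → ℤ) →ₗ[ℤ] ℤ :=
  ∑ i, cc α i • (LinearMap.proj i : (Fin (m + 1) → ℤ) →ₗ[ℤ] ℤ)

lemma phi_apply (x : Fin (m + 1) → ℤ) : phi α x = ∑ i, cc α i * x i := by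
  simp [phi, LinearMap.sum_apply, smul_eq_mul]

lemma range_le_ker : LinearMap.range (seifertMatrix α).mulVecLin ≤ LinearMap.ker (phi α) := by
  rintro _ ⟨y, rfl⟩
  simp only [LinearMap.mem_ker, Matrix.mulVecLin_apply, phi_apply, Matrix.mulVec,
    dotProduct, seifertMatrix, Finset.mul_sum]
  rw [Finset.sum_comm]
  apply Finset.sum_eq_zero
  intro j _
  have hne : (j.castSucc : Fin (m + 1)) ≠ j.succ := by
    simp [Fin.ext_iff]
  have hpt : ∀ i : Fin (m + 1),
      cc α i * ((if i = j.castSucc then α j.castSucc else if i = j.succ then -α j.succ else 0) * y j)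
      = (if i = j.castSucc then cc α i * (α j.castSucc * y j) else 0)
        + (if i = j.succ then cc α i * (-α j.succ * y j) else 0) := by
    intro i
    by_cases h1 : i = j.castSucc
    · subst h1; rw [if_pos rfl, if_pos rfl, if_neg hne]; ring
    · by_cases h2 : i = j.succ
      · subst h2; rw [if_neg h1, if_pos rfl, if_neg h1, if_pos rfl]; ring
      · rw [if_neg h1, if_neg h2, if_neg h1, if_neg h2]; ring
  rw [Finset.sum_congr rfl (fun i _ => hpt i), Finset.sum_add_distrib,
    Finset.sum_ite_eq' Finset.univ, Finset.sum_ite_eq' Finset.univ,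
    if_pos (Finset.mem_univ _), if_pos (Finset.mem_univ _)]
  linear_combination y j * cc_mul α j.castSucc - y j * cc_mul α j.succ

lemma ker_le_range (hpos : ∀ i, 0 < α i)
    (hcop : ∀ i j, i ≠ j → IsCoprime (α i) (α j))
    (x : Fin (m + 1) → ℤ) (hx : ∑ i, cc α i * x i = 0) :
    x ∈ LinearMap.range (seifertMatrix α).mulVecLin := by
  -- each α i divides x i
  have hdvd : ∀ i, α i ∣ x i := by
    intro i
    have h1 : cc α i * x i + ∑ k ∈ Finset.univ.erase i, cc α k * x k = 0 :=
      (Finset.add_sum_erase _ (fun k => cc α k * x k) (Finset.mem_univ i)).trans hx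
    have h2 : α i ∣ ∑ k ∈ Finset.univ.erase i, cc α k * x k := by
      refine Finset.dvd_sum fun k hk => Dvd.dvd.mul_right ?_ _
      exact Finset.dvd_prod_of_mem α
        (Finset.mem_erase.mpr ⟨(Finset.mem_erase.mp hk).1.symm, Finset.mem_univ _⟩)
    have h3 : α i ∣ cc α i * x i := by
      have : cc α i * x i = -(∑ k ∈ Finset.univ.erase i, cc α k * x k) := by linarith
      rw [this]; exact dvd_neg.mpr h2
    have hco : IsCoprime (α i) (cc α i) :=
      IsCoprime.prod_right fun k hk => hcop i k (Ne.symm (Finset.mem_erase.mp hk).1)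
    exact hco.dvd_of_dvd_mul_left h3
  choose z hz using hdvd
  -- the z's sum to zero
  have hP : (0:ℤ) < ∏ k, α k := Finset.prod_pos fun k _ => hpos k
  have hzsum : ∑ i, z i = 0 := by
    have : (∏ k, α k) * ∑ i, z i = 0 := by
      rw [Finset.mul_sum]
      rw [← hx]
      apply Finset.sum_congr rfl
      intro i _
      obtain h := hz i
      linear_combination (-z i) * cc_mul α i - cc α i * h
    rcases mul_eq_zero.mp this with h | h
    · exact absurd h hP.ne'
    · exact h
  -- partial sums
  set Y : ℕ → ℤ := fun t => ∑ k : Fin (m + 1), if (k : ℕ) ≤ t then z k else 0 with hY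
  have hY0 : Y 0 = z 0 := by
    rw [hY]
    rw [show (fun t => ∑ k : Fin (m+1), if (k:ℕ) ≤ t then z k else 0) 0
      = ∑ k : Fin (m+1), if k = 0 then z k else 0 from by
        refine Finset.sum_congr rfl fun k _ => ?_
        congr 1
        simp only [Fin.ext_iff, Fin.val_zero, Nat.le_zero]]
    rw [Finset.sum_ite_eq' Finset.univ, if_pos (Finset.mem_univ _)]
  have hYtop : Y m = 0 := by
    rw [hY]
    have : ∀ k : Fin (m+1), (if (k:ℕ) ≤ m then z k else 0) = z k := fun k =>
      if_pos (Nat.lt_succ_iff.mp k.isLt)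
    simpa [this] using hzsum
  have hYstep : ∀ i : Fin (m + 1), 0 < (i : ℕ) → Y (i : ℕ) = Y ((i : ℕ) - 1) + z i := by
    intro i hi
    rw [hY]
    have : ∀ k : Fin (m+1), (if (k:ℕ) ≤ (i:ℕ) then z k else 0)
        = (if (k:ℕ) ≤ (i:ℕ) - 1 then z k else 0) + (if k = i then z k else 0) := by
      intro k
      by_cases hk : k = i
      · subst hk
        rw [if_pos le_rfl, if_neg (by omega), if_pos rfl]; ring
      · have hk' : (k:ℕ) ≠ (i:ℕ) := fun h => hk (Fin.ext h)
        rw [if_neg hk, add_zero, if_congr (by omega : ((k:ℕ) ≤ (i:ℕ) ↔ (k:ℕ) ≤ (i:ℕ) - 1)) rfl rfl]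
    simp only [this, Finset.sum_add_distrib]
    rw [Finset.sum_ite_eq' Finset.univ, if_pos (Finset.mem_univ _)]
  -- the preimage
  refine ⟨fun j => Y (j : ℕ), ?_⟩
  funext i
  rw [Matrix.mulVecLin_apply]
  show (∑ j, seifertMatrix α i j * Y (j:ℕ)) = x i
  have hsplit : ∀ j : Fin m, seifertMatrix α i j * Y (j:ℕ)
      = (if i = j.castSucc then α i * Y (j:ℕ) else 0)
        + (if i = j.succ then -(α i * Y (j:ℕ)) else 0) := by
    intro j
    have hne : (j.castSucc : Fin (m + 1)) ≠ j.succ := by simp [Fin.ext_iff]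
    unfold seifertMatrix
    by_cases h1 : i = j.castSucc
    · subst h1; rw [if_pos rfl, if_pos rfl, if_neg hne]; ring
    · by_cases h2 : i = j.succ
      · subst h2; rw [if_neg h1, if_pos rfl, if_neg h1, if_pos rfl]; ring
      · rw [if_neg h1, if_neg h2, if_neg h1, if_neg h2]; ring
  rw [Finset.sum_congr rfl fun j _ => hsplit j, Finset.sum_add_distrib]
  have hS1 : (∑ j : Fin m, if i = j.castSucc then α i * Y (j:ℕ) else 0)
      = if h : (i:ℕ) < m then α i * Y (i:ℕ) else 0 := by
    by_cases h : (i:ℕ) < m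
    · rw [dif_pos h]
      rw [Finset.sum_eq_single (⟨(i:ℕ), h⟩ : Fin m)]
      · rw [if_pos (by simp [Fin.ext_iff])]
      · intro j _ hj
        rw [if_neg (fun e => hj (by simp [Fin.ext_iff] at e ⊢; omega))]
      · exact fun h' => absurd (Finset.mem_univ _) h'
    · rw [dif_neg h]
      apply Finset.sum_eq_zero
      intro j _
      rw [if_neg (fun e => h (by simp [Fin.ext_iff] at e; omega))]
  have hS2 : (∑ j : Fin m, if i = j.succ then -(α i * Y (j:ℕ)) else 0)
      = if h : 0 < (i:ℕ) then -(α i * Y ((i:ℕ) - 1)) else 0 := by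
    by_cases h : 0 < (i:ℕ)
    · have hm : (i:ℕ) - 1 < m := by have := i.isLt; omega
      rw [dif_pos h]
      rw [Finset.sum_eq_single (⟨(i:ℕ) - 1, hm⟩ : Fin m)]
      · rw [if_pos (by simp [Fin.ext_iff, Fin.val_succ]; omega)]
      · intro j _ hj
        rw [if_neg (fun e => hj (by simp [Fin.ext_iff, Fin.val_succ] at e ⊢; omega))]
      · exact fun h' => absurd (Finset.mem_univ _) h'
    · rw [dif_neg h]
      apply Finset.sum_eq_zero
      intro j _
      rw [if_neg (fun e => h (by simp [Fin.ext_iff, Fin.val_succ] at e; omega))]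
  rw [hS1, hS2]
  by_cases h1 : (i:ℕ) < m <;> by_cases h2 : 0 < (i:ℕ)
  · -- middle rows
    rw [dif_pos h1, dif_pos h2, hYstep i h2, hz i]; ring
  · -- first row
    rw [dif_pos h1, dif_neg h2]
    have hi0 : i = 0 := by
      apply Fin.ext; simp only [Fin.val_zero]; omega
    subst hi0
    simp only [Fin.val_zero, hY0]
    rw [hz 0]; ring
  · -- last row
    rw [dif_neg h1, dif_pos h2, hz i]
    have hi : (i:ℕ) = m := by have := i.isLt; omega
    have hstep := hYstep i h2
    rw [hi, hYtop] at hstep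
    rw [hi, show Y (m-1) = -z i from by linarith]
    ring
  · -- m = 0
    rw [dif_neg h1, dif_neg h2, hz i]
    have hm0 : m = 0 := by have := i.isLt; omega
    have hi0 : i = 0 := Fin.ext (by omega)
    have : z i = 0 := by
      subst hm0 hi0
      simpa using hzsum
    rw [this]; ring

end

/-- if the positive integers `α_1, …, α_m` are pairwise coprime, then the
cokernel of the map `ℤ^{m-1} → ℤ^m` given by the matrix with diagonal `α_i` and
subdiagonal `-α_{i+1}` is isomorphic to `ℤ`. -/
theorem stmt_9 (m : ℕ) (α : Fin (m + 1) → ℤ) (hpos : ∀ i, 0 < α i)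
    (hcop : ∀ i j, i ≠ j → IsCoprime (α i) (α j)) :
    Nonempty (((Fin (m + 1) → ℤ) ⧸ LinearMap.range (seifertMatrix α).mulVecLin) ≃ₗ[ℤ] ℤ) := by
  have hker : LinearMap.ker (phi α) = LinearMap.range (seifertMatrix α).mulVecLin := by
    apply le_antisymm
    · intro x hx
      exact ker_le_range α hpos hcop x (by rw [← phi_apply]; exact hx)
    · exact range_le_ker α
  have hsurj : Function.Surjective (phi α) := by
    obtain ⟨u, hu⟩ := exists_comb α Finset.univ ⟨0, Finset.mem_univ 0⟩
      (fun i _ j _ hij => hcop i j hij)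
    intro n
    refine ⟨n • u, ?_⟩
    rw [map_smul, smul_eq_mul, phi_apply,
      show (∑ i, cc α i * u i) = 1 from by
        rw [← hu]; exact Finset.sum_congr rfl fun i _ => mul_comm _ _,
      mul_one]
  exact ⟨(Submodule.quotEquivOfEq _ _ hker.symm).trans
    ((phi α).quotKerEquivOfSurjective hsurj)⟩
end

section
/- If α_1, …, α_m are pairwise coprime positive integers, then for the Seifert round-handle chain complex 0 → ℤ →^0 ℤ^{m+2g-1} →^{∂_1} ℤ^m → 0 (with ∂_1 as the matrix with diagonal α_i, subdiagonal -α_{i+1}, zero on the last 2g coordinates), the homology groups are H_2 ≅ ℤ, H_1 ≅ ℤ^{2g}, H_0 ≅ ℤ, i.e., isomorphic to the integral homology of a closed orientable genus-g surface. -/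
/-- The boundary map `∂₁ : ℤ^{m+2g-1} → ℤ^m` of the Seifert round-handle chain complex. -/
def seifertD1 {m g : ℕ} (α : Fin (m + 1) → ℤ) :
    ((Fin m → ℤ) × (Fin (2 * g) → ℤ)) →ₗ[ℤ] (Fin (m + 1) → ℤ) :=
  (seifertMatrix α).mulVecLin ∘ₗ LinearMap.fst ℤ _ _

/-- The boundary map `∂₂ : ℤ → ℤ^{m+2g-1}`, which is zero. -/
def seifertD2 (m g : ℕ) : ℤ →ₗ[ℤ] ((Fin m → ℤ) × (Fin (2 * g) → ℤ)) := 0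

namespace SeifertAux

variable {m : ℕ}

private lemma sum_ite_castSucc (i : Fin (m + 1)) (c : Fin m → ℤ) :
    (∑ j : Fin m, if i = j.castSucc then c j else 0)
      = if h : i ≠ Fin.last m then c (i.castPred h) else 0 := by
  rcases Fin.eq_castSucc_or_eq_last i with ⟨k, rfl⟩ | rfl
  · rw [dif_pos (Fin.castSucc_lt_last k).ne]
    simp [Fin.castSucc_inj, Finset.sum_ite_eq]
  · simp [(Fin.castSucc_lt_last _).ne']

private lemma sum_ite_succ (i : Fin (m + 1)) (c : Fin m → ℤ) :
    (∑ j : Fin m, if i = j.succ then c j else 0)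
      = if h : i ≠ 0 then c (i.pred h) else 0 := by
  rcases Fin.eq_zero_or_eq_succ i with rfl | ⟨k, rfl⟩
  · simp [(Fin.succ_ne_zero _).symm]
  · rw [dif_pos (Fin.succ_ne_zero k)]
    simp [Fin.succ_inj, Finset.sum_ite_eq]

private lemma mulVec_apply (α : Fin (m + 1) → ℤ) (y : Fin m → ℤ) (i : Fin (m + 1)) :
    (seifertMatrix α).mulVec y i
      = α i * ((if h : i ≠ Fin.last m then y (i.castPred h) else 0)
          - (if h : i ≠ 0 then y (i.pred h) else 0)) := by
  have key : ∀ j : Fin m, seifertMatrix α i j * y j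
      = (if i = j.castSucc then α i * y j else 0)
        + (if i = j.succ then -(α i * y j) else 0) := by
    intro j
    simp only [seifertMatrix]
    rcases eq_or_ne i j.castSucc with rfl | h1
    · rw [if_pos rfl, if_pos rfl, if_neg (Fin.castSucc_lt_succ : j.castSucc < j.succ).ne, add_zero]
    · rw [if_neg h1, if_neg h1]
      rcases eq_or_ne i j.succ with rfl | h2
      · simp [neg_mul]
      · simp [h2]
  have : (seifertMatrix α).mulVec y i = ∑ j, seifertMatrix α i j * y j := rfl
  rw [this]
  simp_rw [key]
  rw [Finset.sum_add_distrib, sum_ite_castSucc i (fun j => α i * y j),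
    sum_ite_succ i (fun j => -(α i * y j))]
  split_ifs <;> ring

private lemma mulVec_eq_zero (α : Fin (m + 1) → ℤ) (hpos : ∀ i, 0 < α i)
    (y : Fin m → ℤ) (h : (seifertMatrix α).mulVec y = 0) : y = 0 := by
  have key : ∀ n (hn : n < m), y ⟨n, hn⟩ = 0 := by
    intro n
    induction n with
    | zero =>
      intro hn
      have := congrFun h (Fin.castSucc ⟨0, hn⟩)
      rw [mulVec_apply] at this
      rw [dif_pos (Fin.castSucc_lt_last _).ne, Fin.castPred_castSucc] at this
      rw [dif_neg (by simp [Fin.ext_iff])] at this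
      simp only [Pi.zero_apply, sub_zero, mul_eq_zero] at this
      exact this.resolve_left (hpos _).ne'
    | succ k ih =>
      intro hn
      have := congrFun h (Fin.castSucc ⟨k + 1, hn⟩)
      rw [mulVec_apply] at this
      rw [dif_pos (Fin.castSucc_lt_last _).ne, Fin.castPred_castSucc] at this
      rw [dif_pos (by simp [Fin.ext_iff])] at this
      have hpred : (Fin.castSucc (⟨k + 1, hn⟩ : Fin m)).pred (by simp [Fin.ext_iff])
          = ⟨k, Nat.lt_of_succ_lt hn⟩ := by
        ext; simp
      rw [hpred, ih (Nat.lt_of_succ_lt hn), sub_zero] at this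
      simp only [Pi.zero_apply, mul_eq_zero] at this
      exact this.resolve_left (hpos _).ne'
  funext j
  exact key j.1 j.2

/-- The products `p i = ∏_{k ≠ i} α k`. -/
private def auxP (α : Fin (m + 1) → ℤ) (i : Fin (m + 1)) : ℤ :=
  ∏ j ∈ ({i}ᶜ : Finset (Fin (m + 1))), α j

/-- The linear map `x ↦ ∑ i, p i * x i`. -/
private def auxF (α : Fin (m + 1) → ℤ) : (Fin (m + 1) → ℤ) →ₗ[ℤ] ℤ :=
  ∑ i, auxP α i • LinearMap.proj i

private lemma auxF_apply (α : Fin (m + 1) → ℤ) (x : Fin (m + 1) → ℤ) :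
    auxF α x = ∑ i, auxP α i * x i := by
  simp [auxF, LinearMap.sum_apply]

private lemma auxP_mul_self (α : Fin (m + 1) → ℤ) (i : Fin (m + 1)) :
    α i * auxP α i = ∏ j, α j := by
  have hset : ({i}ᶜ : Finset (Fin (m + 1))) = Finset.univ.erase i := by
    ext j; simp [eq_comm]
  rw [auxP, hset, Finset.mul_prod_erase Finset.univ α (Finset.mem_univ i)]

private lemma range_eq_ker (α : Fin (m + 1) → ℤ) (hpos : ∀ i, 0 < α i)
    (hcop : ∀ i j, i ≠ j → IsCoprime (α i) (α j)) :
    LinearMap.range (seifertMatrix α).mulVecLin = LinearMap.ker (auxF α) := by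
  have hP : (0 : ℤ) < ∏ j, α j := Finset.prod_pos fun j _ => hpos j
  apply le_antisymm
  · rintro x ⟨y, rfl⟩
    rw [LinearMap.mem_ker, Matrix.mulVecLin_apply, auxF_apply]
    simp_rw [mulVec_apply α y]
    have : ∀ i : Fin (m + 1), auxP α i * (α i * ((if h : i ≠ Fin.last m then y (i.castPred h) else 0)
        - (if h : i ≠ 0 then y (i.pred h) else 0)))
        = (∏ j, α j) * ((if h : i ≠ Fin.last m then y (i.castPred h) else 0)
          - (if h : i ≠ 0 then y (i.pred h) else 0)) := by
      intro i
      rw [← mul_assoc, mul_comm (auxP α i) (α i), auxP_mul_self]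
    simp_rw [this, ← Finset.mul_sum]
    have h1 : (∑ i : Fin (m + 1), ((if h : i ≠ Fin.last m then y (i.castPred h) else 0)
        - (if h : i ≠ 0 then y (i.pred h) else 0))) = 0 := by
      rw [Finset.sum_sub_distrib]
      have e1 : (∑ i : Fin (m + 1), if h : i ≠ Fin.last m then y (i.castPred h) else 0)
          = ∑ j : Fin m, y j := by
        rw [Fin.sum_univ_castSucc]
        simp [dif_pos, (Fin.castSucc_lt_last _).ne]
      have e2 : (∑ i : Fin (m + 1), if h : i ≠ 0 then y (i.pred h) else 0)
          = ∑ j : Fin m, y j := by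
        rw [Fin.sum_univ_succ]
        simp [Fin.succ_ne_zero]
      rw [e1, e2, sub_self]
    rw [h1, mul_zero]
  · intro x hx
    rw [LinearMap.mem_ker, auxF_apply] at hx
    -- each α i divides x i
    have hdvd : ∀ i, α i ∣ x i := by
      intro i
      have hco : IsCoprime (α i) (auxP α i) := by
        apply IsCoprime.prod_right
        intro j hj
        exact hcop i j (by simpa [eq_comm] using (Finset.mem_compl.mp hj))
      have h1 : α i ∣ ∑ k ∈ Finset.univ.erase i, auxP α k * x k := by
        apply Finset.dvd_sum
        intro k hk
        have : α i ∣ auxP α k := by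
          apply Finset.dvd_prod_of_mem
          simp [Ne, (Finset.mem_erase.mp hk).1.symm]
        exact this.mul_right _
      have h2 : auxP α i * x i + ∑ k ∈ Finset.univ.erase i, auxP α k * x k = 0 := by
        rw [Finset.add_sum_erase Finset.univ (fun k => auxP α k * x k) (Finset.mem_univ i), hx]
      have h3 : α i ∣ auxP α i * x i := by
        have : auxP α i * x i = -∑ k ∈ Finset.univ.erase i, auxP α k * x k := by linarith
        rw [this]
        exact h1.neg_right
      exact hco.dvd_of_dvd_mul_left h3
    choose z hz using hdvd
    -- the z i sum to zero
    have hzsum : ∑ i, z i = 0 := by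
      have : (∏ j, α j) * (∑ i, z i) = 0 := by
        rw [Finset.mul_sum]
        calc (∑ i, (∏ j, α j) * z i) = ∑ i, auxP α i * x i := by
              apply Finset.sum_congr rfl
              intro i _
              rw [hz i, ← auxP_mul_self α i]; ring
          _ = 0 := hx
      rcases mul_eq_zero.mp this with h | h
      · exact absurd h hP.ne'
      · exact h
    -- build the preimage by partial sums
    set z' : ℕ → ℤ := fun n => if h : n < m + 1 then z ⟨n, h⟩ else 0 with hz'
    have hz'sum : ∑ k ∈ Finset.range (m + 1), z' k = 0 := by
      rw [← hzsum, ← Fin.sum_univ_eq_sum_range (fun k => z' k)]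
      apply Finset.sum_congr rfl
      intro i _
      simp [hz', i.2]; exact fun h => absurd i.2 (by omega)
    refine ⟨fun j => ∑ k ∈ Finset.range (j.1 + 1), z' k, ?_⟩
    rw [Matrix.mulVecLin_apply]
    funext i
    rw [mulVec_apply]
    have hxz : x i = α i * z i := hz i
    rw [hxz]
    congr 1
    have hzi : z' i.1 = z i := by simp [hz', i.2]; exact fun h => absurd i.2 (by omega)
    rcases Fin.eq_castSucc_or_eq_last i with ⟨k, rfl⟩ | rfl
    · rw [dif_pos (Fin.castSucc_lt_last k).ne, Fin.castPred_castSucc]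
      rcases Nat.eq_zero_or_pos k.1 with hk0 | hk0
      · rw [dif_neg (by simp [Fin.ext_iff, hk0])]
        have : k.castSucc.1 = 0 := hk0
        rw [sub_zero]
        simp only [hk0, zero_add, Finset.sum_range_one]
        rw [← hzi]; simp [hk0]
      · rw [dif_pos (by simp [Fin.ext_iff]; omega)]
        have hpred : ((Fin.castSucc k).pred (by simp [Fin.ext_iff]; omega)).1 = k.1 - 1 := by
          simp
        have : (∑ l ∈ Finset.range (k.1 + 1), z' l)
            - (∑ l ∈ Finset.range (((Fin.castSucc k).pred (by simp [Fin.ext_iff]; omega)).1 + 1), z' l)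
            = z' k.1 := by
          rw [hpred]
          have : k.1 - 1 + 1 = k.1 := by omega
          rw [this, Finset.sum_range_succ]
          ring
        have hzi' : z' (k : ℕ) = z k.castSucc := by simpa using hzi
        rw [this, hzi']
    · rw [dif_neg (by simp)]
      rcases Nat.eq_zero_or_pos m with rfl | hm
      · rw [dif_neg (by simp [Fin.ext_iff])]
        have : z (Fin.last 0) = ∑ i : Fin 1, z i := by simp
        rw [this, hzsum]
        ring
      · rw [dif_pos (by simp [Fin.ext_iff]; omega)]
        have hpred : (((Fin.last m).pred (by simp [Fin.ext_iff]; omega)).1 + 1) = m := by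
          simp; omega
        rw [hpred]
        have : ∑ k ∈ Finset.range (m + 1), z' k = (∑ k ∈ Finset.range m, z' k) + z' m :=
          Finset.sum_range_succ _ _
        have hzm : z' m = z (Fin.last m) := by simp [hz']; rfl
        rw [hz'sum] at this
        rw [← hzm]
        linarith

private lemma auxF_surjective (α : Fin (m + 1) → ℤ)
    (hcop : ∀ i j, i ≠ j → IsCoprime (α i) (α j)) :
    Function.Surjective (auxF α) := by
  have hpair : Pairwise (Function.onFun IsCoprime α) := fun i j h => hcop i j h
  obtain ⟨μ, hμ⟩ := exists_sum_eq_one_iff_pairwise_coprime'.mpr hpair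
  intro n
  refine ⟨n • μ, ?_⟩
  rw [auxF_apply]
  have : ∑ i, auxP α i * (n • μ) i = n * ∑ i, μ i * ∏ j ∈ ({i}ᶜ : Finset (Fin (m + 1))), α j := by
    rw [Finset.mul_sum]
    apply Finset.sum_congr rfl
    intro i _
    simp [auxP]
    ring
  rw [this, hμ, mul_one]

end SeifertAux

open SeifertAux in
/-- if the positive integers `α_1, …, α_m` are pairwise coprime, the homology
of the Seifert round-handle chain complex `0 → ℤ →⁰ ℤ^{m+2g-1} →^{∂₁} ℤ^m → 0` is
`H₂ ≅ ℤ`, `H₁ ≅ ℤ^{2g}`, `H₀ ≅ ℤ`, i.e. the integral homology of a closed orientable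
genus-`g` surface. -/
theorem stmt_13 (m g : ℕ) (α : Fin (m + 1) → ℤ) (hpos : ∀ i, 0 < α i)
    (hcop : ∀ i j, i ≠ j → IsCoprime (α i) (α j)) :
    Nonempty ((LinearMap.ker (seifertD2 m g)) ≃ₗ[ℤ] ℤ) ∧
    Nonempty
      ((↥(LinearMap.ker (seifertD1 (g := g) α)) ⧸
          (LinearMap.range (seifertD2 m g)).comap
            (LinearMap.ker (seifertD1 (g := g) α)).subtype) ≃ₗ[ℤ] (Fin (2 * g) → ℤ)) ∧
    Nonempty
      (((Fin (m + 1) → ℤ) ⧸ LinearMap.range (seifertD1 (g := g) α)) ≃ₗ[ℤ] ℤ) := by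
  refine ⟨?_, ?_, ?_⟩
  · -- H₂
    exact ⟨(LinearEquiv.ofEq _ ⊤ (by simp [seifertD2])).trans Submodule.topEquiv⟩
  · -- H₁
    have hbot : (LinearMap.range (seifertD2 m g)).comap
        (LinearMap.ker (seifertD1 (g := g) α)).subtype = ⊥ := by
      simp [seifertD2]
    have kerEquiv : (LinearMap.ker (seifertD1 (g := g) α)) ≃ₗ[ℤ] (Fin (2 * g) → ℤ) :=
      { toFun := fun v => v.1.2
        map_add' := fun _ _ => rfl
        map_smul' := fun _ _ => rfl
        invFun := fun w => ⟨(0, w), by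
          simp [LinearMap.mem_ker, seifertD1]⟩
        left_inv := by
          rintro ⟨⟨a, b⟩, hv⟩
          have : (seifertMatrix α).mulVec a = 0 := by
            simpa [LinearMap.mem_ker, seifertD1] using hv
          have ha : a = 0 := mulVec_eq_zero α hpos a this
          simp [ha]
        right_inv := fun w => rfl }
    exact ⟨(Submodule.quotEquivOfEqBot _ hbot).trans kerEquiv⟩
  · -- H₀
    have hrange : LinearMap.range (seifertD1 (g := g) α) = LinearMap.ker (auxF α) := by
      rw [seifertD1, LinearMap.range_comp]
      have : LinearMap.range (LinearMap.fst ℤ (Fin m → ℤ) (Fin (2 * g) → ℤ)) = ⊤ :=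
        LinearMap.range_eq_top.mpr fun x => ⟨(x, 0), rfl⟩
      rw [this, Submodule.map_top]
      exact range_eq_ker α hpos hcop
    rw [hrange]
    exact ⟨(auxF α).quotKerEquivOfSurjective (auxF_surjective α hcop)⟩
end
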